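/- Let G ≥ 1 and γ_1,…,γ_G ≥ 0 with Γ := Σ_{a=1}^G γ_a > 0. Consider the continuous-time Markov chain on {0,1}^G in which, from every state c and for every a ∈ {1,…,G}, the a-th bit of c flips at rate γ_a (independently of the current state), so that every escape rate equals Γ. Then for any stationary distribution p of this chain, the integrated current assigning weight 1 to every jump satisfies: Cp = Γ·p, the improper integral appearing in the definition of the noise applied to Cp vanishes, and F = Γ and D = Γ, hence S = F²/D = Γ. Consequently, for any feedback policy as in Theorem 1 (i.e., data G, M, J̃, γ^{(a)}, u as there) whose maximal total rate max_{m∈M} max_{i∈{0,1}^G} Σ_{a=1}^G γ^{(a)}_{i_a}(m) is positive, choosing a maximizer (m*, i*) and setting γ_a = γ^{(a)}_{i*_a}(m*) produces a constant feedback policy (jump rates independent of the memory state and of the configuration) together with an integrated current whose asymptotic signal-to-noise ratio equals max_{m∈M} max_{i∈{0,1}^G} Σ_{a=1}^G γ^{(a)}_{i_a}(m), so the bound of Theorem 1 is attained with equality. -/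

import Mathlib

open Matrix MeasureTheory

/-- The rate matrix of a continuous-time Markov chain with off-diagonal entries
`R j i` (the rate of jumps from state `i` to state `j`, for `j ≠ i`) and diagonal
entries minus the escape rates `Γ_i = Σ_{j ≠ i} R j i`. -/
noncomputable def ctmcRateMatrix {V : Type} [Fintype V] [DecidableEq V]
    (R : V → V → ℝ) : Matrix V V ℝ :=
  Matrix.of fun j i => if j = i then -(∑ k, if k = i then (0 : ℝ) else R k i) else R j i

/-- The matrix `C` with entries `C j i = w j i * R j i` off the diagonal and zero diagonal. -/
noncomputable def ctmcCurrentMatrix {V : Type} [Fintype V] [DecidableEq V]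
    (R w : V → V → ℝ) : Matrix V V ℝ :=
  Matrix.of fun j i => if j = i then 0 else w j i * R j i

/-- The asymptotic average current `F = 1ᵀ C p`. -/
noncomputable def ctmcAvgCurrent {V : Type} [Fintype V] [DecidableEq V]
    (R w : V → V → ℝ) (p : V → ℝ) : ℝ :=
  (fun _ => (1 : ℝ)) ⬝ᵥ (ctmcCurrentMatrix R w *ᵥ p)

/-- The integrand `e^{Lτ} − p·1ᵀ` of the improper integral appearing in the noise. -/
noncomputable def ctmcNoiseIntegrand {V : Type} [Fintype V] [DecidableEq V]
    (R : V → V → ℝ) (p : V → ℝ) (τ : ℝ) : Matrix V V ℝ :=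
  NormedSpace.exp (τ • ctmcRateMatrix R) - Matrix.vecMulVec p (fun _ => 1)

/-!
For constant rates every state is left at the same total rate `Γ`, so the current matrix with
unit weights is `C = L + Γ • 1` and a stationary `p` satisfies `Cp = Γ p`. Since `Lp = 0` we have
`e^{Lτ} p = p`, and `(p 1ᵀ) p = p` because `1ᵀp = 1`; so the integrand `e^{Lτ} − p 1ᵀ` of the
noise annihilates `Cp`. Hence `D = 1ᵀC₂p = 1ᵀCp = F = Γ`, and `S = Γ²/Γ = Γ`.
-/

section

attribute [local instance] Matrix.linftyOpNormedRing Matrix.linftyOpNormedAlgebra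

theorem Matrix.exp_mulVec_eq_self_of_mulVec_eq_zero {𝕂 V : Type*} [RCLike 𝕂] [Fintype V]
    [DecidableEq V] {A : Matrix V V 𝕂} {v : V → 𝕂} (hv : A *ᵥ v = 0) :
    NormedSpace.exp A *ᵥ v = v := by
  have hpow : ∀ n ≠ 0, ((n.factorial : 𝕂)⁻¹ • A ^ n) *ᵥ v = 0 := fun n hn => by
    obtain ⟨k, rfl⟩ := Nat.exists_eq_succ_of_ne_zero hn
    rw [smul_mulVec, pow_succ, ← mulVec_mulVec, hv, mulVec_zero, smul_zero]
  have hseries : HasSum (fun n => ((n.factorial : 𝕂)⁻¹ • A ^ n) *ᵥ v) (NormedSpace.exp A *ᵥ v) :=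
    (NormedSpace.exp_series_hasSum_exp' A).map ((mulVecBilin 𝕂 𝕂).flip v)
      (continuous_id.matrix_mulVec continuous_const)
  exact hseries.unique (by simpa using hasSum_single 0 hpow)

end

section ctmc

variable {V : Type} [Fintype V] [DecidableEq V]

def ctmcEscapeRate (R : V → V → ℝ) (i : V) : ℝ :=
  ∑ k, if k = i then 0 else R k i

theorem ctmcEscapeRate_eq_sum_of_moves {ι : Type*} [Fintype ι] {move : ι → V → V}
    (hmove : ∀ a c, move a c ≠ c) {γ : ι → ℝ} {R : V → V → ℝ}
    (hR : ∀ c' c, R c' c = ∑ a, if c' = move a c then γ a else 0) (c : V) :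
    ctmcEscapeRate R c = ∑ a, γ a := by
  have hself : R c c = 0 := by
    rw [hR]
    exact Finset.sum_eq_zero fun a _ => if_neg (hmove a c).symm
  calc ctmcEscapeRate R c = ∑ k, R k c :=
        Finset.sum_congr rfl fun k _ => by split_ifs with h <;> simp [h, hself]
    _ = ∑ a, ∑ k, if k = move a c then γ a else 0 := by simp_rw [hR]; exact Finset.sum_comm
    _ = ∑ a, γ a := by simp

theorem ctmcCurrentMatrix_one_eq {R : V → V → ℝ} {Γ : ℝ} (hΓ : ∀ i, ctmcEscapeRate R i = Γ) :
    ctmcCurrentMatrix R (fun _ _ => 1) = ctmcRateMatrix R + Γ • 1 := by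
  ext j i
  rcases eq_or_ne j i with rfl | h
  · simp [ctmcCurrentMatrix, ctmcRateMatrix, ← ctmcEscapeRate.eq_1, hΓ]
  · simp [ctmcCurrentMatrix, ctmcRateMatrix, h]

theorem ctmcCurrentMatrix_one_mulVec {R : V → V → ℝ} {Γ : ℝ} (hΓ : ∀ i, ctmcEscapeRate R i = Γ)
    {p : V → ℝ} (hp : ctmcRateMatrix R *ᵥ p = 0) :
    ctmcCurrentMatrix R (fun _ _ => 1) *ᵥ p = Γ • p := by
  rw [ctmcCurrentMatrix_one_eq hΓ, add_mulVec, hp, zero_add, smul_mulVec, one_mulVec]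

theorem ctmcAvgCurrent_one {R : V → V → ℝ} {Γ : ℝ} (hΓ : ∀ i, ctmcEscapeRate R i = Γ)
    {p : V → ℝ} (hp : ctmcRateMatrix R *ᵥ p = 0) (hp1 : ∑ i, p i = 1) :
    ctmcAvgCurrent R (fun _ _ => 1) p = Γ := by
  rw [ctmcAvgCurrent, ctmcCurrentMatrix_one_mulVec hΓ hp, dotProduct_smul]
  simp [dotProduct, hp1]

theorem ctmcNoiseIntegrand_mulVec_self {R : V → V → ℝ} {p : V → ℝ}
    (hp : ctmcRateMatrix R *ᵥ p = 0) (hp1 : ∑ i, p i = 1) (τ : ℝ) :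
    ctmcNoiseIntegrand R p τ *ᵥ p = 0 := by
  have hτp : (τ • ctmcRateMatrix R) *ᵥ p = 0 := by rw [smul_mulVec, hp, smul_zero]
  rw [ctmcNoiseIntegrand, sub_mulVec, exp_mulVec_eq_self_of_mulVec_eq_zero hτp, vecMulVec_mulVec]
  simp [dotProduct, hp1]

end ctmc

theorem classical_snr_bound_attained_general
    (G : ℕ)
    -- the maximal total rate of the policy, assumed positive
    (mx : ℝ)
    -- a maximizer `(m*, i*)` and the corresponding constant rates
    (γ : Fin G → ℝ)
    (hattain : ∑ a, γ a = mx)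
    -- the constant-policy chain on `{0,1}^G`: bit `a` flips at rate `γₐ` from every state
    (R : (Fin G → Bool) → (Fin G → Bool) → ℝ)
    (hR : ∀ c' c : Fin G → Bool, R c' c =
      ∑ a : Fin G, if c' = Function.update c a (!(c a)) then γ a else 0)
    -- a stationary distribution
    (p : (Fin G → Bool) → ℝ)
    (hp1 : ∑ c, p c = 1)
    (hpstat : ctmcRateMatrix R *ᵥ p = 0) :
    -- every escape rate equals Γ = Σₐ γₐ
    (∀ c : Fin G → Bool, (∑ k, if k = c then (0 : ℝ) else R k c) = ∑ a, γ a)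
    -- `Cp = Γ·p` for the current counting every jump with weight 1
    ∧ ctmcCurrentMatrix R (fun _ _ => 1) *ᵥ p = (∑ a, γ a) • p
    -- the improper noise integral applied to `Cp` converges entrywise and vanishes
    ∧ (∀ j, IntegrableOn
        (fun τ : ℝ => (ctmcNoiseIntegrand R p τ *ᵥ
          (ctmcCurrentMatrix R (fun _ _ => 1) *ᵥ p)) j) (Set.Ioi 0))
    ∧ (∀ j, (∫ τ in Set.Ioi (0 : ℝ), (ctmcNoiseIntegrand R p τ *ᵥ
          (ctmcCurrentMatrix R (fun _ _ => 1) *ᵥ p)) j) = 0)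
    -- `F = Γ`
    ∧ ctmcAvgCurrent R (fun _ _ => 1) p = ∑ a, γ a
    -- `D = Γ` (noise computed with the vanishing integral term)
    ∧ ((fun _ => (1 : ℝ)) ⬝ᵥ (ctmcCurrentMatrix R (fun _ _ => (1 : ℝ) ^ 2) *ᵥ p)
        + 2 * ((fun _ => (1 : ℝ)) ⬝ᵥ (ctmcCurrentMatrix R (fun _ _ => 1) *ᵥ
            (fun j => ∫ τ in Set.Ioi (0 : ℝ), (ctmcNoiseIntegrand R p τ *ᵥ
              (ctmcCurrentMatrix R (fun _ _ => 1) *ᵥ p)) j))) = ∑ a, γ a)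
    -- hence `S = F²/D = mx`: the bound of Theorem 1 is attained with equality
    ∧ ctmcAvgCurrent R (fun _ _ => 1) p ^ 2 /
        ((fun _ => (1 : ℝ)) ⬝ᵥ (ctmcCurrentMatrix R (fun _ _ => (1 : ℝ) ^ 2) *ᵥ p)
          + 2 * ((fun _ => (1 : ℝ)) ⬝ᵥ (ctmcCurrentMatrix R (fun _ _ => 1) *ᵥ
              (fun j => ∫ τ in Set.Ioi (0 : ℝ), (ctmcNoiseIntegrand R p τ *ᵥ
                (ctmcCurrentMatrix R (fun _ _ => 1) *ᵥ p)) j)))) = mx := by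
  set Γ := ∑ a, γ a
  have hesc : ∀ c, ctmcEscapeRate R c = Γ :=
    ctmcEscapeRate_eq_sum_of_moves (fun a c => by simp) hR
  have hCp := ctmcCurrentMatrix_one_mulVec hesc hpstat
  have hnoise : ∀ τ, ctmcNoiseIntegrand R p τ *ᵥ (ctmcCurrentMatrix R (fun _ _ => 1) *ᵥ p) = 0 :=
    fun τ => by rw [hCp, mulVec_smul, ctmcNoiseIntegrand_mulVec_self hpstat hp1, smul_zero]
  have hF := ctmcAvgCurrent_one hesc hpstat hp1
  have hintegral : (fun j => ∫ τ in Set.Ioi (0 : ℝ), (ctmcNoiseIntegrand R p τ *ᵥ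
      (ctmcCurrentMatrix R (fun _ _ => 1) *ᵥ p)) j) = 0 := funext fun j => by simp [hnoise]
  have hD : (fun _ => (1 : ℝ)) ⬝ᵥ (ctmcCurrentMatrix R (fun _ _ => (1 : ℝ) ^ 2) *ᵥ p)
      + 2 * ((fun _ => (1 : ℝ)) ⬝ᵥ (ctmcCurrentMatrix R (fun _ _ => 1) *ᵥ
        (fun j => ∫ τ in Set.Ioi (0 : ℝ), (ctmcNoiseIntegrand R p τ *ᵥ
          (ctmcCurrentMatrix R (fun _ _ => 1) *ᵥ p)) j))) = Γ := by
    simp only [one_pow, hintegral, mulVec_zero, dotProduct_zero, mul_zero, add_zero]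
    exact hF
  refine ⟨hesc, hCp, fun j => by simp [hnoise], fun j => by simp [hnoise], hF, hD, ?_⟩
  rw [hF, hD, sq, mul_self_div_self, hattain]

/-- **The bound of Theorem 1 is attained by a constant feedback policy.**
Given `G ≥ 1` and a feedback policy (data `M`, `J̃`, `γpol`, `u` as in Theorem 1) whose maximal
total rate `mx = max_{m∈M} max_{i∈{0,1}^G} Σₐ γpol⁽ᵃ⁾_{iₐ}(m)` is positive, choose a maximizer
`(m*, i*)` and set `γₐ = γpol⁽ᵃ⁾_{i*ₐ}(m*)`, so that `γₐ ≥ 0` and `Γ = Σₐ γₐ = mx > 0`.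
Consider the continuous-time Markov chain on `{0,1}^G` in which, from every state `c` and for
every `a`, the `a`-th bit flips at rate `γₐ` (independently of the current state), so every
escape rate equals `Γ`. Then for any stationary distribution `p` and the integrated current
assigning weight `1` to every jump: `Cp = Γ·p`; the improper integral appearing in the
definition of the noise applied to `Cp` converges and vanishes; `F = Γ` and `D = Γ`;
hence `S = F²/D = Γ = mx`, attaining the bound of Theorem 1 with equality. -/
theorem classical_snr_bound_attained
    (G : ℕ) (hG : 1 ≤ G)
    (M : Type) [Fintype M] [DecidableEq M] [Nonempty M]
    (Jt : Set ℝ) (hJtne : Jt.Nonempty) (hJtsub : Jt ⊆ Set.Ici 0)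
    (γpol : Fin G → M → Bool → ℝ) (hγpol : ∀ a m i, γpol a m i ∈ Jt)
    (u : M → Fin G → Bool → M)
    -- the maximal total rate of the policy, assumed positive
    (mx : ℝ)
    (hmx : mx = Finset.univ.sup' Finset.univ_nonempty
        (fun mi : M × (Fin G → Bool) => ∑ a, γpol a mi.1 (mi.2 a)))
    (hmxpos : 0 < mx)
    -- a maximizer `(m*, i*)` and the corresponding constant rates
    (mstar : M) (istar : Fin G → Bool)
    (γ : Fin G → ℝ) (hγdef : ∀ a, γ a = γpol a mstar (istar a))
    (hattain : ∑ a, γ a = mx)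
    -- the constant-policy chain on `{0,1}^G`: bit `a` flips at rate `γₐ` from every state
    (R : (Fin G → Bool) → (Fin G → Bool) → ℝ)
    (hR : ∀ c' c : Fin G → Bool, R c' c =
      ∑ a : Fin G, if c' = Function.update c a (!(c a)) then γ a else 0)
    -- a stationary distribution
    (p : (Fin G → Bool) → ℝ)
    (hp0 : ∀ c, 0 ≤ p c) (hp1 : ∑ c, p c = 1)
    (hpstat : ctmcRateMatrix R *ᵥ p = 0) :
    -- every escape rate equals Γ = Σₐ γₐ
    (∀ c : Fin G → Bool, (∑ k, if k = c then (0 : ℝ) else R k c) = ∑ a, γ a)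
    -- `Cp = Γ·p` for the current counting every jump with weight 1
    ∧ ctmcCurrentMatrix R (fun _ _ => 1) *ᵥ p = (∑ a, γ a) • p
    -- the improper noise integral applied to `Cp` converges entrywise and vanishes
    ∧ (∀ j, IntegrableOn
        (fun τ : ℝ => (ctmcNoiseIntegrand R p τ *ᵥ
          (ctmcCurrentMatrix R (fun _ _ => 1) *ᵥ p)) j) (Set.Ioi 0))
    ∧ (∀ j, (∫ τ in Set.Ioi (0 : ℝ), (ctmcNoiseIntegrand R p τ *ᵥ
          (ctmcCurrentMatrix R (fun _ _ => 1) *ᵥ p)) j) = 0)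
    -- `F = Γ`
    ∧ ctmcAvgCurrent R (fun _ _ => 1) p = ∑ a, γ a
    -- `D = Γ` (noise computed with the vanishing integral term)
    ∧ ((fun _ => (1 : ℝ)) ⬝ᵥ (ctmcCurrentMatrix R (fun _ _ => (1 : ℝ) ^ 2) *ᵥ p)
        + 2 * ((fun _ => (1 : ℝ)) ⬝ᵥ (ctmcCurrentMatrix R (fun _ _ => 1) *ᵥ
            (fun j => ∫ τ in Set.Ioi (0 : ℝ), (ctmcNoiseIntegrand R p τ *ᵥ
              (ctmcCurrentMatrix R (fun _ _ => 1) *ᵥ p)) j))) = ∑ a, γ a)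
    -- hence `S = F²/D = mx`: the bound of Theorem 1 is attained with equality
    ∧ ctmcAvgCurrent R (fun _ _ => 1) p ^ 2 /
        ((fun _ => (1 : ℝ)) ⬝ᵥ (ctmcCurrentMatrix R (fun _ _ => (1 : ℝ) ^ 2) *ᵥ p)
          + 2 * ((fun _ => (1 : ℝ)) ⬝ᵥ (ctmcCurrentMatrix R (fun _ _ => 1) *ᵥ
              (fun j => ∫ τ in Set.Ioi (0 : ℝ), (ctmcNoiseIntegrand R p τ *ᵥ
                (ctmcCurrentMatrix R (fun _ _ => 1) *ᵥ p)) j)))) = mx :=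
  classical_snr_bound_attained_general G mx γ hattain R hR p hp1 hpstat
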